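/- Let (R, m, k) be a commutative noetherian local ring, let M be a finitely generated R-module, let m ≥ 0 be an integer, and let φ : M → R^{⊕m} be a monomorphism. Then there exist an integer n with 0 ≤ n ≤ m, a finitely generated R-module N, and a monomorphism g : N → R^{⊕n} with image contained in m·R^{⊕n}, such that φ is equivalent to the homomorphism g ⊕ id : N ⊕ R^{⊕(m−n)} → R^{⊕n} ⊕ R^{⊕(m−n)}. Moreover, in this situation φ is irreducible if and only if g ⊕ id is irreducible, if and only if g is irreducible. -/

import Mathlib

/-!
If some `φ v` has a unit coordinate, that coordinate functional splits off a copy of `R` from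
both `M` and `R^m`, compatibly with `φ`; iterating until no coordinate of the image is a unit
leaves a map `g` with image in `𝔪 R^n`. Irreducibility is invariant under equivalence, and
`g ⊕ id_F` is irreducible iff `g` is: any factorization of `g ⊕ id_F` through `L` splits
`L ≅ L' × F`, so it comes from a factorization of `g` through the summand `L'`, which is again
finitely generated.
-/

universe u

/-- A homomorphism `f : M → N` of `R`-modules is *irreducible* if it is neither a split
monomorphism nor a split epimorphism, and for every factorization `f = h ∘ g` through a
finitely generated `R`-module `L`, either `g` is a split monomorphism or `h` is a split
epimorphism. -/
def IsIrreducibleHom {R : Type u} [CommRing R] {M N : Type u} [AddCommGroup M] [Module R M]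
    [AddCommGroup N] [Module R N] (f : M →ₗ[R] N) : Prop :=
  (¬ ∃ r : N →ₗ[R] M, r ∘ₗ f = LinearMap.id) ∧
  (¬ ∃ s : N →ₗ[R] M, f ∘ₗ s = LinearMap.id) ∧
  ∀ (L : Type u) [AddCommGroup L] [Module R L], Module.Finite R L →
    ∀ (g : M →ₗ[R] L) (h : L →ₗ[R] N), h ∘ₗ g = f →
      (∃ r : L →ₗ[R] M, r ∘ₗ g = LinearMap.id) ∨ (∃ s : N →ₗ[R] L, h ∘ₗ s = LinearMap.id)

theorem Submodule.mem_smul_top_of_forall_apply_mem {R ι : Type*} [CommRing R] [Fintype ι]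
    (I : Ideal R) {x : ι → R} (hx : ∀ i, x i ∈ I) : x ∈ I • (⊤ : Submodule R (ι → R)) := by
  classical
  rw [pi_eq_sum_univ x]
  exact Submodule.sum_mem _ fun i _ ↦ Submodule.smul_mem_smul (hx i) Submodule.mem_top

namespace LinearMap

section Split

variable {R : Type*} [CommRing R] {M N P : Type*} [AddCommGroup M] [Module R M]
  [AddCommGroup N] [Module R N] [AddCommGroup P] [Module R P]

def IsSplitMono (f : M →ₗ[R] N) : Prop := ∃ r : N →ₗ[R] M, r ∘ₗ f = id

def IsSplitEpi (f : M →ₗ[R] N) : Prop := ∃ s : N →ₗ[R] M, f ∘ₗ s = id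

theorem IsSplitMono.comp {g : N →ₗ[R] P} {f : M →ₗ[R] N} (hg : g.IsSplitMono)
    (hf : f.IsSplitMono) : (g ∘ₗ f).IsSplitMono := by
  obtain ⟨rg, hrg⟩ := hg
  obtain ⟨rf, hrf⟩ := hf
  exact ⟨rf ∘ₗ rg, by rw [comp_assoc, ← comp_assoc f g rg, hrg, id_comp, hrf]⟩

theorem IsSplitEpi.comp {g : N →ₗ[R] P} {f : M →ₗ[R] N} (hg : g.IsSplitEpi)
    (hf : f.IsSplitEpi) : (g ∘ₗ f).IsSplitEpi := by
  obtain ⟨sg, hsg⟩ := hg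
  obtain ⟨sf, hsf⟩ := hf
  exact ⟨sf ∘ₗ sg, by rw [comp_assoc, ← comp_assoc sg sf f, hsf, id_comp, hsg]⟩

theorem _root_.LinearEquiv.isSplitMono (e : M ≃ₗ[R] N) : e.toLinearMap.IsSplitMono :=
  ⟨e.symm.toLinearMap, by simp⟩

theorem _root_.LinearEquiv.isSplitEpi (e : M ≃ₗ[R] N) : e.toLinearMap.IsSplitEpi :=
  ⟨e.symm.toLinearMap, by simp⟩

theorem isSplitMono_prodMap_id_iff (f : M →ₗ[R] N) :
    (f.prodMap (id : P →ₗ[R] P)).IsSplitMono ↔ f.IsSplitMono := by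
  constructor
  · rintro ⟨r, hr⟩
    refine ⟨fst R M P ∘ₗ r ∘ₗ inl R N P, ext fun x ↦ ?_⟩
    simpa using congr_arg Prod.fst (congr($hr (x, 0)))
  · rintro ⟨r, hr⟩
    exact ⟨r.prodMap id, by rw [prodMap_comp, hr, id_comp, prodMap_id]⟩

theorem isSplitEpi_prodMap_id_iff (f : M →ₗ[R] N) :
    (f.prodMap (id : P →ₗ[R] P)).IsSplitEpi ↔ f.IsSplitEpi := by
  constructor
  · rintro ⟨s, hs⟩
    refine ⟨fst R M P ∘ₗ s ∘ₗ inl R N P, ext fun x ↦ ?_⟩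
    simpa using congr_arg Prod.fst (congr($hs (x, 0)))
  · rintro ⟨s, hs⟩
    exact ⟨s.prodMap id, by rw [prodMap_comp, hs, id_comp, prodMap_id]⟩

@[simps]
def equivKerProdOfCompEqId (ψ : M →ₗ[R] P) (σ : P →ₗ[R] M) (h : ψ ∘ₗ σ = id) :
    M ≃ₗ[R] ker ψ × P where
  toFun w := (⟨w - σ (ψ w), by simp [show ψ (σ (ψ w)) = ψ w from congr($h (ψ w))]⟩, ψ w)
  invFun z := z.1 + σ z.2
  map_add' _ _ := by ext <;> simp; abel
  map_smul' _ _ := by ext <;> simp [smul_sub]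
  left_inv _ := by simp
  right_inv z := by
    have hσ : ψ (σ z.2) = z.2 := congr($h z.2)
    ext <;> simp [hσ, mem_ker.1 z.1.2]

end Split

section Equivalent

variable {R : Type*} [CommRing R] {A B A' B' A'' B'' C D C' D' E : Type*}
  [AddCommGroup A] [Module R A] [AddCommGroup B] [Module R B]
  [AddCommGroup A'] [Module R A'] [AddCommGroup B'] [Module R B']
  [AddCommGroup A''] [Module R A''] [AddCommGroup B''] [Module R B'']
  [AddCommGroup C] [Module R C] [AddCommGroup D] [Module R D]
  [AddCommGroup C'] [Module R C'] [AddCommGroup D'] [Module R D'] [AddCommGroup E] [Module R E]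

def IsEquivalent (f : A →ₗ[R] B) (f' : A' →ₗ[R] B') : Prop :=
  ∃ (p : A ≃ₗ[R] A') (q : B ≃ₗ[R] B'), f' ∘ₗ p.toLinearMap = q.toLinearMap ∘ₗ f

theorem IsEquivalent.refl (f : A →ₗ[R] B) : IsEquivalent f f :=
  ⟨LinearEquiv.refl R A, LinearEquiv.refl R B, rfl⟩

theorem IsEquivalent.symm {f : A →ₗ[R] B} {f' : A' →ₗ[R] B'} (h : IsEquivalent f f') :
    IsEquivalent f' f := by
  obtain ⟨p, q, hpq⟩ := h
  refine ⟨p.symm, q.symm, ext fun x ↦ q.injective ?_⟩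
  simpa using congr($hpq (p.symm x)).symm

theorem IsEquivalent.trans {f : A →ₗ[R] B} {f' : A' →ₗ[R] B'} {f'' : A'' →ₗ[R] B''}
    (h : IsEquivalent f f') (h' : IsEquivalent f' f'') : IsEquivalent f f'' := by
  obtain ⟨p, q, hpq⟩ := h
  obtain ⟨p', q', hpq'⟩ := h'
  refine ⟨p.trans p', q.trans q', ?_⟩
  rw [LinearEquiv.coe_trans, LinearEquiv.coe_trans, ← comp_assoc, hpq', comp_assoc, hpq,
    comp_assoc]

theorem IsEquivalent.prodMap {f : A →ₗ[R] B} {f' : A' →ₗ[R] B'} {h : C →ₗ[R] D}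
    {h' : C' →ₗ[R] D'} (hf : IsEquivalent f f') (hh : IsEquivalent h h') :
    IsEquivalent (f.prodMap h) (f'.prodMap h') := by
  obtain ⟨p, q, hpq⟩ := hf
  obtain ⟨p', q', hpq'⟩ := hh
  refine ⟨p.prodCongr p', q.prodCongr q', ext fun x ↦ Prod.ext ?_ ?_⟩
  · exact LinearMap.congr_fun hpq x.1
  · exact LinearMap.congr_fun hpq' x.2

theorem IsEquivalent.injective {f : A →ₗ[R] B} {f' : A' →ₗ[R] B'} (h : IsEquivalent f f')
    (hf : Function.Injective f) : Function.Injective f' := by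
  obtain ⟨p, q, hpq⟩ := h
  have hf' : ⇑f' = q ∘ f ∘ p.symm := by ext x; simpa using congr($hpq (p.symm x))
  rw [hf']
  exact q.injective.comp (hf.comp p.symm.injective)

theorem isEquivalent_linearEquiv_comp (f : A →ₗ[R] B) (e : B ≃ₗ[R] B') :
    IsEquivalent f (e.toLinearMap ∘ₗ f) :=
  ⟨LinearEquiv.refl R A, e, rfl⟩

theorem isEquivalent_prodMap_id_of_unique [Unique C] (f : A →ₗ[R] B) :
    IsEquivalent f (f.prodMap (id : C →ₗ[R] C)) :=
  ⟨LinearEquiv.prodUnique.symm, LinearEquiv.prodUnique.symm, by ext <;> simp [eq_iff_true_of_subsingleton]⟩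

theorem isEquivalent_prodMap_id_prodMap_id (f : A →ₗ[R] B) (e : (C × D) ≃ₗ[R] E) :
    IsEquivalent ((f.prodMap (id : C →ₗ[R] C)).prodMap (id : D →ₗ[R] D))
      (f.prodMap (id : E →ₗ[R] E)) :=
  ⟨(LinearEquiv.prodAssoc R A C D).trans ((LinearEquiv.refl R A).prodCongr e),
    (LinearEquiv.prodAssoc R B C D).trans ((LinearEquiv.refl R B).prodCongr e), rfl⟩

end Equivalent

section Irreducible

variable {R : Type u} [CommRing R] {M N M' N' : Type u}
  [AddCommGroup M] [Module R M] [AddCommGroup N] [Module R N]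
  [AddCommGroup M'] [Module R M'] [AddCommGroup N'] [Module R N']

def FactorizationsSplit (f : M →ₗ[R] N) : Prop :=
  ∀ (L : Type u) [AddCommGroup L] [Module R L], Module.Finite R L →
    ∀ (g : M →ₗ[R] L) (h : L →ₗ[R] N), h ∘ₗ g = f → g.IsSplitMono ∨ h.IsSplitEpi

theorem isIrreducibleHom_iff (f : M →ₗ[R] N) :
    IsIrreducibleHom f ↔ ¬ f.IsSplitMono ∧ ¬ f.IsSplitEpi ∧ f.FactorizationsSplit :=
  Iff.rfl

theorem IsEquivalent.isIrreducibleHom {f : M →ₗ[R] N} {f' : M' →ₗ[R] N'}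
    (hff' : IsEquivalent f f') (hf : IsIrreducibleHom f) : IsIrreducibleHom f' := by
  obtain ⟨p, q, hpq⟩ := hff'
  have hf_eq : f = q.symm.toLinearMap ∘ₗ f' ∘ₗ p.toLinearMap := by
    rw [hpq, ← comp_assoc, LinearEquiv.symm_comp, id_comp]
  rw [isIrreducibleHom_iff] at hf ⊢
  obtain ⟨hf_mono, hf_epi, hf_fact⟩ := hf
  refine ⟨fun h ↦ hf_mono ?_, fun h ↦ hf_epi ?_, fun L _ _ hL g h hgh ↦ ?_⟩
  · rw [hf_eq]
    exact q.symm.isSplitMono.comp (h.comp p.isSplitMono)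
  · rw [hf_eq]
    exact q.symm.isSplitEpi.comp (h.comp p.isSplitEpi)
  · refine (hf_fact L hL (g ∘ₗ p.toLinearMap) (q.symm.toLinearMap ∘ₗ h)
      (by rw [comp_assoc, ← comp_assoc _ g h, hgh, hf_eq])).imp (fun hg ↦ ?_) (fun hh ↦ ?_)
    · simpa [comp_assoc] using hg.comp p.symm.isSplitMono
    · simpa [← comp_assoc] using q.isSplitEpi.comp hh

theorem IsEquivalent.isIrreducibleHom_iff {f : M →ₗ[R] N} {f' : M' →ₗ[R] N'}
    (h : IsEquivalent f f') : IsIrreducibleHom f ↔ IsIrreducibleHom f' :=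
  ⟨h.isIrreducibleHom, h.symm.isIrreducibleHom⟩

end Irreducible

section ProdMapId

variable {R : Type u} [CommRing R] {M N F L : Type u}
  [AddCommGroup M] [Module R M] [AddCommGroup N] [Module R N] [AddCommGroup F] [Module R F]
  [AddCommGroup L] [Module R L]

theorem exists_prodMap_id_of_comp_eq_prodMap_id {f : M →ₗ[R] N} {g : M × F →ₗ[R] L}
    {h : L →ₗ[R] N × F} (hgh : h ∘ₗ g = f.prodMap id) :
    ∃ (L' : Type u) (_ : AddCommGroup L') (_ : Module R L') (e : L ≃ₗ[R] L' × F)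
      (g' : M →ₗ[R] L') (h' : L' →ₗ[R] N), h' ∘ₗ g' = f ∧
      e.toLinearMap ∘ₗ g = g'.prodMap id ∧ h ∘ₗ e.symm.toLinearMap = h'.prodMap id := by
  have hgh' (x : M) (c : F) : h (g (x, c)) = (f x, c) := congr($hgh (x, c))
  let ψ := snd R N F ∘ₗ h
  have hψ : ψ ∘ₗ (g ∘ₗ inr R M F) = id := ext fun c ↦ by simp [ψ, hgh']
  let g' : M →ₗ[R] ker ψ := codRestrict (ker ψ) (g ∘ₗ inl R M F) fun x ↦ by simp [ψ, hgh']
  refine ⟨ker ψ, _, _, equivKerProdOfCompEqId ψ _ hψ, g', fst R N F ∘ₗ h ∘ₗ (ker ψ).subtype,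
    ext fun x ↦ congr_arg Prod.fst (hgh' x 0), ext fun ⟨x, c⟩ ↦ ?_, ext fun z ↦ ?_⟩
  · have hc : ψ (g (x, c)) = c := by simp [ψ, hgh']
    refine Prod.ext (Subtype.ext ?_) hc
    simp only [comp_apply, LinearEquiv.coe_coe, equivKerProdOfCompEqId_apply, hc]
    rw [← map_sub]
    simp only [inr_apply, Prod.mk_sub_mk, sub_zero, sub_self]
    rfl
  · have hz : (h z.1).2 = 0 := z.1.2
    simp [hgh', Prod.ext_iff, hz]

theorem factorizationsSplit_prodMap_id_iff [Module.Finite R F] (f : M →ₗ[R] N) :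
    (f.prodMap (id : F →ₗ[R] F)).FactorizationsSplit ↔ f.FactorizationsSplit := by
  constructor
  · intro hf L _ _ hL g h hgh
    refine (hf (L × F) inferInstance (g.prodMap id) (h.prodMap id)
      (by rw [prodMap_comp, hgh, id_comp])).imp ?_ ?_
    · exact (isSplitMono_prodMap_id_iff g).1
    · exact (isSplitEpi_prodMap_id_iff h).1
  · intro hf L _ _ hL g h hgh
    obtain ⟨L', _, _, e, g', h', hgh', he_g, hh_e⟩ := exists_prodMap_id_of_comp_eq_prodMap_id hgh
    have : Module.Finite R L' :=
      .of_surjective (fst R L' F ∘ₗ e.toLinearMap) (Prod.fst_surjective.comp e.surjective)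
    refine (hf L' this g' h' hgh').imp (fun hg' ↦ ?_) (fun hh' ↦ ?_)
    · have := e.symm.isSplitMono.comp ((isSplitMono_prodMap_id_iff (P := F) g').2 hg')
      rwa [← he_g, ← comp_assoc, LinearEquiv.symm_comp, id_comp] at this
    · have := ((isSplitEpi_prodMap_id_iff (P := F) h').2 hh').comp e.isSplitEpi
      rwa [← hh_e, comp_assoc, LinearEquiv.symm_comp, comp_id] at this

theorem isIrreducibleHom_prodMap_id_iff [Module.Finite R F] (f : M →ₗ[R] N) :
    IsIrreducibleHom (f.prodMap (id : F →ₗ[R] F)) ↔ IsIrreducibleHom f := by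
  simp only [isIrreducibleHom_iff, isSplitMono_prodMap_id_iff, isSplitEpi_prodMap_id_iff,
    factorizationsSplit_prodMap_id_iff]

end ProdMapId

section Minimal

variable {R : Type u} [CommRing R] {M N P : Type u}
  [AddCommGroup M] [Module R M] [AddCommGroup N] [Module R N] [AddCommGroup P] [Module R P]

theorem isEquivalent_restrict_prodMap_id (φ : M →ₗ[R] N) (ψ : N →ₗ[R] P) (σ : P →ₗ[R] M)
    (h : (ψ ∘ₗ φ) ∘ₗ σ = id) :
    IsEquivalent φ ((φ.restrict (p := ker (ψ ∘ₗ φ)) (q := ker ψ) fun _ hx ↦ hx).prodMap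
      (id : P →ₗ[R] P)) :=
  ⟨equivKerProdOfCompEqId (ψ ∘ₗ φ) σ h, equivKerProdOfCompEqId ψ (φ ∘ₗ σ) h,
    ext fun _ ↦ Prod.ext (Subtype.ext (map_sub φ _ _)) rfl⟩

theorem exists_isEquivalent_prodMap_id_of_isUnit_apply {m : ℕ} (φ : M →ₗ[R] (Fin (m + 1) → R))
    {v : M} {i : Fin (m + 1)} (hv : IsUnit (φ v i)) :
    ∃ (M' : Type u) (_ : AddCommGroup M') (_ : Module R M') (φ' : M' →ₗ[R] (Fin m → R)),
      IsEquivalent φ (φ'.prodMap (id : R →ₗ[R] R)) := by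
  let e : (Fin (m + 1) → R) ≃ₗ[R] R × (Fin m → R) :=
    (LinearEquiv.funCongrLeft R R (Equiv.swap 0 i)).trans (Fin.consLinearEquiv R _).symm
  have he (x : Fin (m + 1) → R) : (e x).1 = x i := by simp [e]
  let ψ := fst R R (Fin m → R)
  have hσ : (ψ ∘ₗ e.toLinearMap ∘ₗ φ) ∘ₗ toSpanSingleton R M ((hv.unit⁻¹ : Rˣ) • v) = id := by
    ext
    simp [ψ, he, Units.smul_def]
  exact ⟨_, _, _, (Submodule.sndEquiv R R (Fin m → R)).toLinearMap ∘ₗ _,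
    (isEquivalent_linearEquiv_comp φ e).trans ((isEquivalent_restrict_prodMap_id _ ψ _ hσ).trans
      ((isEquivalent_linearEquiv_comp _ _).prodMap (.refl id)))⟩

variable [IsLocalRing R]

theorem exists_isUnit_apply_of_not_range_le {ι : Type*} [Fintype ι] (φ : M →ₗ[R] (ι → R))
    (h : ¬ range φ ≤ IsLocalRing.maximalIdeal R • ⊤) : ∃ v i, IsUnit (φ v i) := by
  by_contra! hφ
  refine h ?_
  rintro _ ⟨v, rfl⟩
  exact Submodule.mem_smul_top_of_forall_apply_mem _ fun i ↦
    (IsLocalRing.mem_maximalIdeal _).2 (hφ v i)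

theorem exists_isEquivalent_prodMap_id_range_le_maximalIdeal_smul (m : ℕ)
    (φ : M →ₗ[R] (Fin m → R)) :
    ∃ n k, n + k = m ∧ ∃ (N : Type u) (_ : AddCommGroup N) (_ : Module R N)
      (g : N →ₗ[R] (Fin n → R)), range g ≤ IsLocalRing.maximalIdeal R • ⊤ ∧
        IsEquivalent φ (g.prodMap (id : (Fin k → R) →ₗ[R] (Fin k → R))) := by
  induction m generalizing M with
  | zero =>
    exact ⟨0, 0, rfl, M, _, _, φ, fun x _ ↦ Subsingleton.elim x 0 ▸ Submodule.zero_mem _,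
      isEquivalent_prodMap_id_of_unique φ⟩
  | succ m ih =>
    by_cases hφ : range φ ≤ IsLocalRing.maximalIdeal R • ⊤
    · exact ⟨m + 1, 0, rfl, M, _, _, φ, hφ, isEquivalent_prodMap_id_of_unique φ⟩
    obtain ⟨v, i, hv⟩ := exists_isUnit_apply_of_not_range_le φ hφ
    obtain ⟨M', _, _, φ', hφφ'⟩ := exists_isEquivalent_prodMap_id_of_isUnit_apply φ hv
    obtain ⟨n, k, rfl, N, _, _, g, hg, hφ'g⟩ := ih φ'
    refine ⟨n, k + 1, by omega, N, _, _, g, hg, hφφ'.trans ?_⟩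
    exact (hφ'g.prodMap (.refl id)).trans (isEquivalent_prodMap_id_prodMap_id g
      ((LinearEquiv.prodComm R _ R).trans (Fin.consLinearEquiv R fun _ ↦ R)))

end Minimal

end LinearMap

theorem mono_to_free_equivalent_minimal_general
    {R : Type u} [CommRing R] [IsLocalRing R]
    {M : Type u} [AddCommGroup M] [Module R M] [Module.Finite R M]
    (m : ℕ) (φ : M →ₗ[R] (Fin m → R)) (hφ : Function.Injective φ) :
    ∃ (n : ℕ), n ≤ m ∧
      ∃ (N : Type u) (_ : AddCommGroup N) (_ : Module R N), Module.Finite R N ∧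
        ∃ g : N →ₗ[R] (Fin n → R),
          Function.Injective g ∧
          LinearMap.range g ≤
            (IsLocalRing.maximalIdeal R) • (⊤ : Submodule R (Fin n → R)) ∧
          (∃ (p : M ≃ₗ[R] (N × (Fin (m - n) → R)))
             (q : (Fin m → R) ≃ₗ[R] ((Fin n → R) × (Fin (m - n) → R))),
            (g.prodMap (LinearMap.id (R := R) (M := Fin (m - n) → R))) ∘ₗ p.toLinearMap
              = q.toLinearMap ∘ₗ φ) ∧
          (IsIrreducibleHom φ ↔
            IsIrreducibleHom (g.prodMap (LinearMap.id (R := R) (M := Fin (m - n) → R)))) ∧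
          (IsIrreducibleHom φ ↔ IsIrreducibleHom g) := by
  obtain ⟨n, k, hnk, N, _, _, g, hg, hφg⟩ :=
    LinearMap.exists_isEquivalent_prodMap_id_range_le_maximalIdeal_smul m φ
  obtain rfl : k = m - n := by omega
  obtain ⟨p, q, hpq⟩ := id hφg
  have hN : Module.Finite R N :=
    .of_surjective (LinearMap.fst R N _ ∘ₗ p.toLinearMap) (Prod.fst_surjective.comp p.surjective)
  have hg_inj : Function.Injective g := by
    have := hφg.injective hφ
    rw [LinearMap.coe_prodMap, Prod.map_injective] at this
    exact this.1
  exact ⟨n, by omega, N, _, _, hN, g, hg_inj, hg, ⟨p, q, hpq⟩, hφg.isIrreducibleHom_iff,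
    hφg.isIrreducibleHom_iff.trans (LinearMap.isIrreducibleHom_prodMap_id_iff g)⟩

/-- Every monomorphism `φ : M → R^m` over a commutative noetherian local ring `(R, 𝔪)` is
equivalent to a map `g ⊕ id : N ⊕ R^{m-n} → R^n ⊕ R^{m-n}` where `g : N → R^n` is a
monomorphism with image inside `𝔪·R^n`; moreover `φ` is irreducible iff `g ⊕ id` is
irreducible iff `g` is irreducible. -/
theorem mono_to_free_equivalent_minimal
    {R : Type u} [CommRing R] [IsNoetherianRing R] [IsLocalRing R]
    {M : Type u} [AddCommGroup M] [Module R M] [Module.Finite R M]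
    (m : ℕ) (φ : M →ₗ[R] (Fin m → R)) (hφ : Function.Injective φ) :
    ∃ (n : ℕ), n ≤ m ∧
      ∃ (N : Type u) (_ : AddCommGroup N) (_ : Module R N), Module.Finite R N ∧
        ∃ g : N →ₗ[R] (Fin n → R),
          Function.Injective g ∧
          LinearMap.range g ≤
            (IsLocalRing.maximalIdeal R) • (⊤ : Submodule R (Fin n → R)) ∧
          (∃ (p : M ≃ₗ[R] (N × (Fin (m - n) → R)))
             (q : (Fin m → R) ≃ₗ[R] ((Fin n → R) × (Fin (m - n) → R))),
            (g.prodMap (LinearMap.id (R := R) (M := Fin (m - n) → R))) ∘ₗ p.toLinearMap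
              = q.toLinearMap ∘ₗ φ) ∧
          (IsIrreducibleHom φ ↔
            IsIrreducibleHom (g.prodMap (LinearMap.id (R := R) (M := Fin (m - n) → R)))) ∧
          (IsIrreducibleHom φ ↔ IsIrreducibleHom g) :=
  mono_to_free_equivalent_minimal_general m φ hφ
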